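/- For every integer m, real numbers r ≥ 0, k > 0 and α, one has ∫_0^{2π} e^{i k r cos α cos φ - i m φ} sin(k |sin α| r sin φ) dφ = - sign(sin α) · 2π i^{|m|} J_{|m|}(k r) sin(m α). -/

import Mathlib

open Complex Real

/-- Bessel function of the first kind of natural order `n`. -/
noncomputable def besselJ (n : ℕ) (z : ℂ) : ℂ :=
  ∑' k : ℕ, ((-1 : ℂ) ^ k / ((k.factorial : ℂ) * ((k + n).factorial : ℂ))) * (z / 2) ^ (2 * k + n)

/-!
Writing `sin w = (e^{iw} - e^{-iw}) / (2i)` and merging exponents, the integrand is a difference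
of two shifted Jacobi–Anger integrands `e^{iz cos(φ ∓ α)} e^{-imφ}` with `z = kr`. Expanding
`e^{iz cos φ}` into its power series and integrating term by term, the `m`-th Fourier coefficient
of `cos^n φ` vanishes unless `n = |m| + 2j`, and the surviving terms are exactly the series of
`2π i^{|m|} J_{|m|}(z)`. The shifts contribute phases `e^{±imα}`, which combine to `sin(mα)`,
and `sin(|s| x) = sign(s) sin(s x)` accounts for the absolute value.
-/

open intervalIntegral

lemma integral_exp_I_mul_intCast_mul (n : ℤ) :
    ∫ φ in (0 : ℝ)..2 * π, exp (I * n * φ) = if n = 0 then 2 * π else 0 := by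
  split_ifs with hn
  · simp [hn]
  · have : I * n * ((2 * π : ℝ) : ℂ) = n * (2 * π * I) := by push_cast; ring
    rw [integral_exp_mul_complex (mul_ne_zero I_ne_zero (Int.cast_ne_zero.2 hn)), this,
      exp_int_mul_two_pi_mul_I]
    simp

lemma ofReal_cos_pow_mul_exp_eq_sum (n : ℕ) (m : ℤ) (φ : ℝ) :
    (Real.cos φ : ℂ) ^ n * exp (-I * m * φ) =
      ∑ j ∈ Finset.range (n + 1),
        (n.choose j : ℂ) / 2 ^ n * exp (I * ((2 * j - n - m : ℤ) : ℂ) * φ) := by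
  rw [ofReal_cos, Complex.cos, div_pow, add_pow, Finset.sum_div, Finset.sum_mul]
  refine Finset.sum_congr rfl fun j hj => ?_
  have hjn : j ≤ n := Nat.lt_succ_iff.mp (Finset.mem_range.mp hj)
  rw [← Complex.exp_nat_mul, ← Complex.exp_nat_mul, ← Complex.exp_add,
    show ∀ a b c d : ℂ, a * c / b * d = c / b * (a * d) from fun _ _ _ _ => by ring,
    ← Complex.exp_add]
  congr 2
  rw [Nat.cast_sub hjn]
  push_cast
  ring

lemma integral_cos_pow_mul_exp (n : ℕ) (m : ℤ) :
    ∫ φ in (0 : ℝ)..2 * π, (Real.cos φ : ℂ) ^ n * exp (-I * m * φ) =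
      2 * π / 2 ^ n * ∑ j ∈ Finset.range (n + 1),
        if 2 * (j : ℤ) - n = m then (n.choose j : ℂ) else 0 := by
  simp_rw [ofReal_cos_pow_mul_exp_eq_sum]
  rw [integral_finsetSum fun j _ => (by fun_prop : Continuous _).intervalIntegrable _ _,
    Finset.mul_sum]
  refine Finset.sum_congr rfl fun j _ => ?_
  rw [integral_const_mul, integral_exp_I_mul_intCast_mul]
  split_ifs <;> first | omega | (push_cast; ring)

lemma integral_cos_pow_mul_exp_of_notMem_range (m n : ℕ)
    (hn : n ∉ Set.range fun k : ℕ => m + 2 * k) :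
    ∫ φ in (0 : ℝ)..2 * π, (Real.cos φ : ℂ) ^ n * exp (-I * (m : ℤ) * φ) = 0 := by
  rw [integral_cos_pow_mul_exp, Finset.sum_eq_zero, mul_zero]
  intro j hj
  have hjn : j ≤ n := Nat.lt_succ_iff.mp (Finset.mem_range.mp hj)
  exact if_neg fun hjm => hn ⟨n - j, by dsimp only; omega⟩

lemma integral_cos_pow_add_two_mul_mul_exp (m k : ℕ) :
    ∫ φ in (0 : ℝ)..2 * π, (Real.cos φ : ℂ) ^ (m + 2 * k) * exp (-I * (m : ℤ) * φ) =
      2 * π / 2 ^ (m + 2 * k) * ((m + 2 * k).choose k : ℂ) := by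
  rw [integral_cos_pow_mul_exp, Finset.sum_eq_single_of_mem (m + k) (by simp; omega)
    fun j _ hj => if_neg (by omega), if_pos (by push_cast; ring),
    ← Nat.choose_symm (by omega), show m + 2 * k - (m + k) = k by omega]

lemma hasSum_integral_exp_mul_cos_mul_exp (z : ℂ) (m : ℤ) :
    HasSum (fun n : ℕ => (I * z) ^ n / n.factorial *
        ∫ φ in (0 : ℝ)..2 * π, (Real.cos φ : ℂ) ^ n * exp (-I * m * φ))
      (∫ φ in (0 : ℝ)..2 * π, exp (I * z * Real.cos φ) * exp (-I * m * φ)) := by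
  simp_rw [← integral_const_mul]
  refine hasSum_integral_of_dominated_convergence (fun n _ => ‖z‖ ^ n / n.factorial)
    (fun n => (by fun_prop : Continuous _).aestronglyMeasurable) (fun n => ?_)
    (.of_forall fun _ _ => Real.summable_pow_div_factorial ‖z‖) intervalIntegrable_const
    (.of_forall fun φ _ => ?_)
  · refine .of_forall fun φ _ => ?_
    have hcos : ‖(Real.cos φ : ℂ)‖ ^ n ≤ 1 := by
      rw [norm_real, Real.norm_eq_abs]
      exact pow_le_one₀ (abs_nonneg _) (Real.abs_cos_le_one φ)
    have hexp : ‖exp (-I * m * φ)‖ = 1 := by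
      rw [norm_exp]; simp
    simp only [norm_mul, norm_div, norm_pow, norm_I, one_mul, Complex.norm_natCast, hexp, mul_one]
    exact mul_le_of_le_one_right (by positivity) hcos
  · have hexp := NormedSpace.expSeries_div_hasSum_exp (I * z * Real.cos φ)
    rw [← exp_eq_exp_ℂ] at hexp
    simpa only [mul_pow, div_mul_eq_mul_div, mul_assoc] using hexp.mul_right (exp (-I * m * φ))

lemma integral_exp_mul_cos_mul_exp_natCast (m : ℕ) (z : ℂ) :
    ∫ φ in (0 : ℝ)..2 * π, exp (I * z * Real.cos φ) * exp (-I * (m : ℤ) * φ) =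
      2 * π * I ^ m * besselJ m z := by
  have hinj : (fun k : ℕ => m + 2 * k).Injective := fun a b h => by simpa using h
  have hsum := hasSum_integral_exp_mul_cos_mul_exp z m
  rw [← hinj.hasSum_iff fun n hn => by
    rw [integral_cos_pow_mul_exp_of_notMem_range m n hn, mul_zero]] at hsum
  rw [besselJ, ← tsum_mul_left, ← hsum.tsum_eq]
  refine tsum_congr fun k => ?_
  have hfac : ((m + 2 * k).factorial : ℂ) =
      ((m + 2 * k).choose k) * k.factorial * (k + m).factorial := by
    have h := Nat.choose_mul_factorial_mul_factorial (by omega : k ≤ m + 2 * k)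
    rw [show m + 2 * k - k = k + m by omega] at h
    exact_mod_cast h.symm
  rw [Function.comp_apply, integral_cos_pow_add_two_mul_mul_exp, hfac, mul_pow, pow_add I,
    pow_mul, I_sq, div_pow, show 2 * k + m = m + 2 * k by ring]
  have hchoose : ((m + 2 * k).choose k : ℂ) ≠ 0 :=
    Nat.cast_ne_zero.2 (Nat.choose_pos (by omega)).ne'
  field_simp

lemma periodic_exp_mul_cos_mul_exp (z : ℂ) (m : ℤ) :
    Function.Periodic (fun φ : ℝ => exp (I * z * Real.cos φ) * exp (-I * m * φ)) (2 * π) := by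
  intro φ
  have : -I * m * ((φ + 2 * π : ℝ) : ℂ) = -I * m * φ + (-m : ℤ) * (2 * π * I) := by
    push_cast; ring
  simp only [Real.cos_add_two_pi, this, Complex.exp_add, exp_int_mul_two_pi_mul_I, mul_one]

lemma integral_exp_mul_cos_mul_exp (m : ℤ) (z : ℂ) :
    ∫ φ in (0 : ℝ)..2 * π, exp (I * z * Real.cos φ) * exp (-I * m * φ) =
      2 * π * I ^ m.natAbs * besselJ m.natAbs z := by
  obtain ⟨n, rfl | rfl⟩ := Int.eq_nat_or_neg m
  · exact integral_exp_mul_cos_mul_exp_natCast n z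
  · have hneg := integral_comp_neg (a := 0) (b := 2 * π)
      fun φ => exp (I * z * Real.cos φ) * exp (-I * (n : ℤ) * φ)
    have hper := (periodic_exp_mul_cos_mul_exp z n).intervalIntegral_add_eq (-(2 * π)) 0
    simp only [Real.cos_neg, neg_add_cancel, zero_add, neg_zero, ofReal_neg] at hneg hper
    rw [Int.natAbs_neg, Int.natAbs_natCast, ← integral_exp_mul_cos_mul_exp_natCast, ← hper,
      ← hneg]
    push_cast
    ring_nf

lemma integral_exp_mul_cos_sub_mul_exp (m : ℤ) (z : ℂ) (β : ℝ) :
    ∫ φ in (0 : ℝ)..2 * π, exp (I * z * Real.cos (φ - β)) * exp (-I * m * φ) =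
      exp (-I * m * β) * (2 * π * I ^ m.natAbs * besselJ m.natAbs z) := by
  have hshift : ∀ φ : ℝ, exp (I * z * Real.cos (φ - β)) * exp (-I * m * φ) =
      exp (-I * m * β) * (exp (I * z * Real.cos (φ - β)) * exp (-I * m * (φ - β : ℝ))) := by
    intro φ
    rw [mul_left_comm]
    congr 1
    rw [← Complex.exp_add]
    push_cast
    ring_nf
  have hper := (periodic_exp_mul_cos_mul_exp z m).intervalIntegral_add_eq (-β) 0
  simp only [zero_add, ← sub_eq_neg_add] at hper
  simp_rw [hshift]
  rw [integral_const_mul, integral_comp_sub_right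
    (fun φ => exp (I * z * Real.cos φ) * exp (-I * m * φ)), zero_sub, hper,
    integral_exp_mul_cos_mul_exp]

lemma integral_exp_mul_cos_mul_sin (m : ℤ) (z : ℂ) (β : ℝ) :
    ∫ φ in (0 : ℝ)..2 * π, exp (I * z * Real.cos β * Real.cos φ - I * m * φ) *
        Complex.sin (z * Real.sin β * Real.sin φ) =
      -(2 * π) * I ^ m.natAbs * besselJ m.natAbs z * Real.sin (m * β) := by
  have hsplit : ∀ φ : ℝ,
      exp (I * z * Real.cos β * Real.cos φ - I * m * φ) *
          Complex.sin (z * Real.sin β * Real.sin φ) =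
        I / 2 * (exp (I * z * Real.cos (φ - -β)) * exp (-I * m * φ)) -
          I / 2 * (exp (I * z * Real.cos (φ - β)) * exp (-I * m * φ)) := by
    intro φ
    rw [Real.cos_sub, Real.cos_sub, Real.cos_neg, Real.sin_neg, Complex.sin]
    push_cast
    simp only [mul_add, mul_neg, neg_mul, Complex.exp_add, Complex.exp_sub, Complex.exp_neg]
    ring_nf
  simp_rw [hsplit]
  rw [integral_sub ((by fun_prop : Continuous _).intervalIntegrable _ _)
      ((by fun_prop : Continuous _).intervalIntegrable _ _),
    integral_const_mul, integral_const_mul, integral_exp_mul_cos_sub_mul_exp,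
    integral_exp_mul_cos_sub_mul_exp, ofReal_sin, Complex.sin]
  push_cast
  ring_nf

lemma Real.sin_abs_mul (s x : ℝ) : Real.sin (|s| * x) = Real.sign s * Real.sin (s * x) := by
  rcases lt_trichotomy s 0 with hs | rfl | hs
  · rw [abs_of_neg hs, Real.sign_of_neg hs, neg_mul, Real.sin_neg, neg_one_mul]
  · simp
  · rw [abs_of_pos hs, Real.sign_of_pos hs, one_mul]

theorem integral_sin_part_general (m : ℤ) (r k α : ℝ) :
    (∫ φ in (0 : ℝ)..(2 * π),
        Complex.exp (Complex.I * k * r * Real.cos α * Real.cos φ - Complex.I * m * φ) *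
          (Real.sin (k * |Real.sin α| * r * Real.sin φ) : ℂ)) =
      -(Real.sign (Real.sin α) : ℂ) * (2 * (π : ℂ)) * Complex.I ^ m.natAbs *
        besselJ m.natAbs ((k : ℂ) * r) * (Real.sin (m * α) : ℂ) := by
  have hintegrand : ∀ φ : ℝ,
      Complex.exp (Complex.I * k * r * Real.cos α * Real.cos φ - Complex.I * m * φ) *
          (Real.sin (k * |Real.sin α| * r * Real.sin φ) : ℂ) =
        Real.sign (Real.sin α) * (exp (I * (k * r) * Real.cos α * Real.cos φ - I * m * φ) *
          Complex.sin ((k * r) * Real.sin α * Real.sin φ)) := by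
    intro φ
    rw [show k * |Real.sin α| * r * Real.sin φ = |Real.sin α| * (k * r * Real.sin φ) by ring,
      Real.sin_abs_mul]
    push_cast
    ring_nf
  simp_rw [hintegrand]
  rw [integral_const_mul, integral_exp_mul_cos_mul_sin]
  ring

/-- `∫_0^{2π} e^{ikr cosα cosφ - imφ} sin(k|sinα| r sinφ) dφ
      = - sign(sinα) 2π i^{|m|} J_{|m|}(kr) sin(mα)`. -/
theorem integral_sin_part (m : ℤ) (r k α : ℝ) (hr : 0 ≤ r) (hk : 0 < k) :
    (∫ φ in (0 : ℝ)..(2 * π),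
        Complex.exp (Complex.I * k * r * Real.cos α * Real.cos φ - Complex.I * m * φ) *
          (Real.sin (k * |Real.sin α| * r * Real.sin φ) : ℂ)) =
      -(Real.sign (Real.sin α) : ℂ) * (2 * (π : ℂ)) * Complex.I ^ m.natAbs *
        besselJ m.natAbs ((k : ℂ) * r) * (Real.sin (m * α) : ℂ) :=
  integral_sin_part_general m r k α
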